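/- Let A be an N×N Hermitian positive definite matrix with condition number κ = ‖A‖·‖A⁻¹‖ > 1, let 0 < ε < 1, let M = √(I − A/‖A‖), and let T ≥ ⌈κ·ln(1/ε)⌉ be an integer. Then (1/2)·‖ (∑_{k=0}^{T} M^k (I/N) M^k) / tr(∑_{k=0}^{T} M^k (I/N) M^k) − A⁻¹/tr(A⁻¹) ‖₁ ≤ ε. -/

import Mathlib

open scoped Matrix.Norms.L2Operator ComplexOrder
open Matrix

/-- The trace norm (sum of singular values) of a square complex matrix,
realized as `tr √(Mᴴ M)`. -/
noncomputable def traceNorm {n : ℕ} (M : Matrix (Fin n) (Fin n) ℂ) : ℝ :=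
  ((((Matrix.posSemidef_conjTranspose_mul_self M).1.eigenvectorUnitary : Matrix (Fin n) (Fin n) ℂ) *
      diagonal (fun i => ((Real.sqrt ((Matrix.posSemidef_conjTranspose_mul_self M).1.eigenvalues i) : ℝ) : ℂ)) *
      (star (Matrix.posSemidef_conjTranspose_mul_self M).1.eigenvectorUnitary :
        Matrix (Fin n) (Fin n) ℂ)).trace).re

/-!
Everything in the statement is a function of the Hermitian matrix `M`: since
`A = ‖A‖ (1 - M²)`, the truncated series is `n⁻¹ p(M)` with `p(x) = ∑_{k ≤ T} (x²)ᵏ` and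
`A⁻¹ = ‖A‖⁻¹ t(M)` with `t(x) = (1 - x²)⁻¹`. Diagonalising `M`, the difference of the two
trace-normalised matrices has eigenvalues `p(μᵢ)/∑ⱼ p(μⱼ) - t(μᵢ)/∑ⱼ t(μⱼ)`, and its trace norm is
the ℓ¹-norm of this vector. The eigenvalues of `A` are at least `‖A⁻¹‖⁻¹`, so `μᵢ² ≤ 1 - 1/κ`, and
`t - p = (μ²)^(T+1) t ≤ (1 - 1/κ)^(T+1) t`. A uniform relative error `δ` in positive weights moves
the normalised weights by at most `2δ` in ℓ¹, and `(1 - 1/κ)^(T+1) ≤ exp(-(T+1)/κ) ≤ ε`.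
-/

namespace Matrix

variable {𝕜 ι : Type*} [RCLike 𝕜] [Fintype ι] {M : Matrix ι ι 𝕜}

lemma IsHermitian.trace_cfc [DecidableEq ι] (hM : M.IsHermitian) (f : ℝ → ℝ) :
    (cfc f M).trace = ∑ i, (f (hM.eigenvalues i) : 𝕜) := by
  rw [hM.cfc_eq, IsHermitian.cfc, Unitary.conjStarAlgAut_apply, trace_mul_cycle,
    Unitary.coe_star_mul_self, one_mul, trace_diagonal]
  rfl

lemma IsHermitian.inv_cfc [DecidableEq ι] (hM : M.IsHermitian) {f : ℝ → ℝ}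
    (hf : ∀ x ∈ spectrum ℝ M, f x ≠ 0) : (cfc f M)⁻¹ = cfc (fun x => (f x)⁻¹) M := by
  rw [nonsing_inv_eq_ringInverse, cfc_inv f M hf (M.finite_real_spectrum.continuousOn f)]

lemma IsHermitian.cfc_const_mul_one_sub_sq [DecidableEq ι] (hM : M.IsHermitian) (c : ℝ) :
    cfc (fun x => c * (1 - x ^ 2)) M = c • (1 - M * M) := by
  rw [cfc_const_mul c (fun x => 1 - x ^ 2) M, cfc_sub (fun _ => 1) (fun x : ℝ => x ^ 2) M,
    cfc_const_one ℝ M, cfc_pow_id M 2, sq]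

lemma IsHermitian.sum_pow_mul_smul_one_mul_pow [DecidableEq ι] (hM : M.IsHermitian) (c : 𝕜)
    (m : ℕ) : ∑ k ∈ Finset.range m, M ^ k * (c • 1) * M ^ k
      = c • cfc (fun x : ℝ => ∑ k ∈ Finset.range m, (x ^ 2) ^ k) M := by
  rw [← Finset.sum_fn (Finset.range m) (fun k (x : ℝ) => (x ^ 2) ^ k),
    cfc_sum _ M _ fun _ _ => by fun_prop, Finset.smul_sum]
  refine Finset.sum_congr rfl fun k _ => ?_
  rw [cfc_pow (fun x : ℝ => x ^ 2) k M, cfc_pow_id M 2, ← pow_mul, two_mul, pow_add,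
    mul_smul_comm, mul_one, smul_mul_assoc]

open scoped MatrixOrder in
lemma PosDef.norm_inv_inv_le_of_mem_spectrum [DecidableEq ι] {A : Matrix ι ι ℂ} (hA : A.PosDef)
    {a : ℝ} (ha : a ∈ spectrum ℝ A) : ‖A⁻¹‖⁻¹ ≤ a := by
  have ha0 : 0 < a := (isStrictlyPositive_iff_posDef.mpr hA).spectrum_pos ha
  have hinv : a⁻¹ ∈ spectrum ℝ A⁻¹ := by
    rw [nonsing_inv_eq_ringInverse, ← cfc_ringInverse_id (R := ℝ) (a := A) hA.isUnit,
      cfc_map_spectrum (fun x : ℝ => x⁻¹) A (hf := A.finite_real_spectrum.continuousOn _)]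
    exact Set.mem_image_of_mem _ ha
  have : Nontrivial (Matrix ι ι ℂ) := by
    by_contra h
    simp [not_nontrivial_iff_subsingleton.mp h, spectrum.of_subsingleton] at ha
  have hnorm := spectrum.norm_le_norm_of_mem hinv
  rw [Real.norm_of_nonneg (inv_nonneg.mpr ha0.le)] at hnorm
  exact inv_le_of_inv_le₀ ha0 hnorm

noncomputable def traceNormalized (X : Matrix ι ι 𝕜) : Matrix ι ι 𝕜 := X.trace⁻¹ • X

lemma traceNormalized_smul {K : Type*} [Field K] [Algebra K 𝕜] {c : K} (hc : c ≠ 0)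
    (X : Matrix ι ι 𝕜) : traceNormalized (c • X) = traceNormalized X := by
  have hc' : algebraMap K 𝕜 c ≠ 0 := (map_ne_zero _).mpr hc
  rw [traceNormalized, traceNormalized, ← algebraMap_smul 𝕜 c X, trace_smul, smul_smul,
    smul_eq_mul, mul_inv]
  congr 1
  field_simp

lemma IsHermitian.traceNormalized_cfc [DecidableEq ι] (hM : M.IsHermitian) (g : ℝ → ℝ) :
    traceNormalized (cfc g M) = cfc (fun x => g x / ∑ i, g (hM.eigenvalues i)) M := by
  simp_rw [div_eq_inv_mul]
  rw [traceNormalized, hM.trace_cfc, cfc_const_mul _ _ _ (M.finite_real_spectrum.continuousOn _),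
    ← RCLike.ofReal_sum, ← RCLike.ofReal_inv, ← RCLike.real_smul_eq_coe_smul]

end Matrix

lemma traceNorm_eq_re_trace_cfc_sqrt {n : ℕ} (X : Matrix (Fin n) (Fin n) ℂ) :
    traceNorm X = (cfc Real.sqrt (Xᴴ * X)).trace.re := by
  rw [traceNorm, (posSemidef_conjTranspose_mul_self X).1.cfc_eq, IsHermitian.cfc,
    Unitary.conjStarAlgAut_apply]
  rfl

lemma Matrix.IsHermitian.traceNorm_cfc {n : ℕ} {M : Matrix (Fin n) (Fin n) ℂ} (hM : M.IsHermitian)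
    (g : ℝ → ℝ) : traceNorm (cfc g M) = ∑ i, |g (hM.eigenvalues i)| := by
  have hcont (f : ℝ → ℝ) : ContinuousOn f (spectrum ℝ M) := M.finite_real_spectrum.continuousOn f
  have hsq : (cfc g M)ᴴ * cfc g M = cfc (fun x => g x * g x) M := by
    rw [← star_eq_conjTranspose, (cfc_predicate g M).star_eq, cfc_mul g g M (hcont g) (hcont g)]
  rw [traceNorm_eq_re_trace_cfc_sqrt, hsq,
    ← cfc_comp' Real.sqrt _ M ((M.finite_real_spectrum.image _).continuousOn _) (hcont _),
    hM.trace_cfc]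
  simp only [Real.sqrt_mul_self_eq_abs, ← RCLike.ofReal_sum]
  exact Complex.ofReal_re _

open Finset

lemma half_sum_abs_div_sum_sub_div_sum_le {ι : Type*} [Fintype ι] [Nonempty ι] {p t : ι → ℝ}
    {δ : ℝ} (hp : ∀ i, 0 < p i) (hpt : ∀ i, p i ≤ t i) (hgap : ∀ i, t i - p i ≤ δ * t i) :
    (1 / 2) * ∑ i, |p i / ∑ j, p j - t i / ∑ j, t j| ≤ δ := by
  set P := ∑ j, p j
  set Y := ∑ j, t j
  have hP : 0 < P := sum_pos (fun i _ => hp i) univ_nonempty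
  have hPY : P ≤ Y := sum_le_sum fun i _ => hpt i
  have hY : 0 < Y := hP.trans_le hPY
  have hterm (i : ι) : |p i / P - t i / Y| ≤ (t i - p i) / Y + p i * (1 / P - 1 / Y) := by
    have hsplit : p i / P - t i / Y = p i * (1 / P - 1 / Y) - (t i - p i) / Y := by ring
    have h₁ : 0 ≤ (t i - p i) / Y := div_nonneg (sub_nonneg.2 (hpt i)) hY.le
    have h₂ : 0 ≤ p i * (1 / P - 1 / Y) :=
      mul_nonneg (hp i).le (sub_nonneg.2 (one_div_le_one_div_of_le hP hPY))
    rw [hsplit, abs_le]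
    constructor <;> linarith
  calc (1 / 2) * ∑ i, |p i / P - t i / Y|
      ≤ (1 / 2) * ∑ i, ((t i - p i) / Y + p i * (1 / P - 1 / Y)) := by gcongr with i; exact hterm i
    _ = (Y - P) / Y := by
      rw [sum_add_distrib, ← sum_div, ← sum_mul, sum_sub_distrib]
      field_simp
      ring
    _ ≤ δ := by
      rw [div_le_iff₀ hY, ← sum_sub_distrib, mul_sum]
      exact sum_le_sum fun i _ => hgap i

lemma inv_one_sub_sub_geom_sum {x : ℝ} (hx : x ≠ 1) (m : ℕ) :
    (1 - x)⁻¹ - ∑ k ∈ range m, x ^ k = x ^ m * (1 - x)⁻¹ := by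
  have : 1 - x ≠ 0 := sub_ne_zero.2 hx.symm
  rw [geom_sum_eq hx]
  field_simp
  ring

lemma half_sum_abs_geom_sum_div_sum_sub_inv_one_sub_div_sum_le {ι : Type*} [Fintype ι]
    [Nonempty ι] {x : ι → ℝ} {q : ℝ} (hx : ∀ i, 0 ≤ x i) (hxq : ∀ i, x i ≤ q) (hq : q < 1)
    (m : ℕ) :
    (1 / 2) * ∑ i, |(∑ k ∈ range (m + 1), x i ^ k) / ∑ j, ∑ k ∈ range (m + 1), x j ^ k
      - (1 - x i)⁻¹ / ∑ j, (1 - x j)⁻¹| ≤ q ^ (m + 1) := by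
  have htail (i : ι) : (1 - x i)⁻¹ - ∑ k ∈ range (m + 1), x i ^ k = x i ^ (m + 1) * (1 - x i)⁻¹ :=
    inv_one_sub_sub_geom_sum ((hxq i).trans_lt hq).ne _
  have ht (i : ι) : 0 ≤ (1 - x i)⁻¹ := inv_nonneg.2 (by linarith [hxq i])
  refine half_sum_abs_div_sum_sub_div_sum_le (fun i => geom_sum_pos (hx i) m.succ_ne_zero)
    (fun i => ?_) (fun i => ?_)
  · have := mul_nonneg (pow_nonneg (hx i) (m + 1)) (ht i)
    linarith [htail i]
  · rw [htail i]
    gcongr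
    exacts [ht i, hx i, hxq i]

lemma one_sub_inv_pow_le_of_ceil_le {κ ε : ℝ} (hκ : 1 ≤ κ) (hε : 0 < ε) {T : ℕ}
    (hT : ⌈κ * Real.log (1 / ε)⌉₊ ≤ T) : (1 - κ⁻¹) ^ T ≤ ε := by
  have hκ0 : 0 < κ := one_pos.trans_le hκ
  have hlog : Real.log (1 / ε) ≤ T / κ := by
    rw [le_div_iff₀ hκ0, mul_comm]
    exact Nat.ceil_le.1 hT
  calc (1 - κ⁻¹) ^ T ≤ Real.exp (-κ⁻¹) ^ T := by
        gcongr
        · exact sub_nonneg.2 (inv_le_one_of_one_le₀ hκ)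
        · linarith [Real.add_one_le_exp (-κ⁻¹)]
    _ = Real.exp (-(T / κ)) := by rw [← Real.exp_nat_mul]; ring_nf
    _ ≤ Real.exp (-Real.log (1 / ε)) := Real.exp_le_exp.2 (neg_le_neg hlog)
    _ = ε := by rw [one_div, Real.log_inv, neg_neg, Real.exp_log hε]

theorem matrix_inversion_discrete_approx_general {n : ℕ} (hn : 0 < n)
    (A M : Matrix (Fin n) (Fin n) ℂ) (hA : A.PosDef)
    (κ : ℝ) (hκdef : κ = ‖A‖ * ‖A⁻¹‖) (hκ : 1 < κ)
    (ε : ℝ) (hε0 : 0 < ε)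
    (hM : M.PosSemidef) (hMsq : M * M = 1 - (‖A‖⁻¹ : ℝ) • A)
    (T : ℕ) (hT : (⌈κ * Real.log (1/ε)⌉₊ : ℕ) ≤ T) :
    (1/2) * traceNorm
      ((∑ k ∈ Finset.range (T+1),
          M ^ k * ((n : ℂ)⁻¹ • (1 : Matrix (Fin n) (Fin n) ℂ)) * M ^ k).trace⁻¹ •
        (∑ k ∈ Finset.range (T+1),
          M ^ k * ((n : ℂ)⁻¹ • (1 : Matrix (Fin n) (Fin n) ℂ)) * M ^ k) -
       (A⁻¹.trace)⁻¹ • A⁻¹) ≤ ε := by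
  have : NeZero n := ⟨hn.ne'⟩
  have hMh : M.IsHermitian := hM.isHermitian
  have hAnorm : 0 < ‖A‖ := norm_pos_iff.2 hA.isUnit.ne_zero
  have hκinv : 0 < κ⁻¹ := inv_pos.2 (one_pos.trans hκ)
  have hAcfc : A = cfc (fun x => ‖A‖ * (1 - x ^ 2)) M := by
    rw [hMh.cfc_const_mul_one_sub_sq, hMsq, sub_sub_cancel, smul_smul,
      mul_inv_cancel₀ hAnorm.ne', one_smul]
  have hgap (x : ℝ) (hx : x ∈ spectrum ℝ M) : κ⁻¹ ≤ 1 - x ^ 2 := by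
    have hmem := cfc_map_spectrum (fun x => ‖A‖ * (1 - x ^ 2)) M ▸ Set.mem_image_of_mem _ hx
    rw [← hAcfc] at hmem
    rw [hκdef, mul_inv, inv_mul_le_iff₀ hAnorm]
    exact hA.norm_inv_inv_le_of_mem_spectrum hmem
  have hAinv : A⁻¹ = (‖A‖⁻¹ : ℝ) • cfc (fun x : ℝ => (1 - x ^ 2)⁻¹) M := by
    conv_lhs => rw [hAcfc]
    rw [hMh.inv_cfc fun x hx => (mul_pos hAnorm (hκinv.trans_le (hgap x hx))).ne',
      ← cfc_const_mul _ _ _ (M.finite_real_spectrum.continuousOn _)]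
    simp only [mul_inv]
  change (1 / 2) * traceNorm (traceNormalized _ - traceNormalized A⁻¹) ≤ ε
  rw [hMh.sum_pow_mul_smul_one_mul_pow, hAinv, traceNormalized_smul (by simpa using hn.ne'),
    traceNormalized_smul (inv_ne_zero hAnorm.ne'), hMh.traceNormalized_cfc,
    hMh.traceNormalized_cfc, ← cfc_sub _ _ M (M.finite_real_spectrum.continuousOn _)
      (M.finite_real_spectrum.continuousOn _), hMh.traceNorm_cfc]
  refine (half_sum_abs_geom_sum_div_sum_sub_inv_one_sub_div_sum_le
    (x := fun i => hMh.eigenvalues i ^ 2) (fun i => sq_nonneg _)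
    (fun i => ?_) (sub_lt_self 1 hκinv) T).trans
    (one_sub_inv_pow_le_of_ceil_le hκ.le hε0 (hT.trans T.le_succ))
  linarith [hgap _ (hMh.eigenvalues_mem_spectrum_real i)]

/-- Matrix inversion I: approximating the normalized inverse of a positive
definite matrix via the truncated discrete-time Lyapunov series. -/
theorem matrix_inversion_discrete_approx {n : ℕ} (hn : 0 < n)
    (A M : Matrix (Fin n) (Fin n) ℂ) (hA : A.PosDef)
    (κ : ℝ) (hκdef : κ = ‖A‖ * ‖A⁻¹‖) (hκ : 1 < κ)
    (ε : ℝ) (hε0 : 0 < ε) (hε1 : ε < 1)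
    (hM : M.PosSemidef) (hMsq : M * M = 1 - (‖A‖⁻¹ : ℝ) • A)
    (T : ℕ) (hT : (⌈κ * Real.log (1/ε)⌉₊ : ℕ) ≤ T) :
    (1/2) * traceNorm
      ((∑ k ∈ Finset.range (T+1),
          M ^ k * ((n : ℂ)⁻¹ • (1 : Matrix (Fin n) (Fin n) ℂ)) * M ^ k).trace⁻¹ •
        (∑ k ∈ Finset.range (T+1),
          M ^ k * ((n : ℂ)⁻¹ • (1 : Matrix (Fin n) (Fin n) ℂ)) * M ^ k) -
       (A⁻¹.trace)⁻¹ • A⁻¹) ≤ ε :=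
  matrix_inversion_discrete_approx_general hn A M hA κ hκdef hκ ε hε0 hM hMsq T hT
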